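/- arXiv:2602.04400 — 6 statements merged into one kernel-verified Lean document; each statement's English description precedes it below -/
import Mathlib

section
/- For all ω > 0, η > 0, the function f(x) = (ω/(ω+3η))·[ω·x^(ω−1) + (2η − 8ωη·ln x)·x^(2ω−1)] is nonnegative on (0,1] and integrates to 1 over (0,1); i.e., f is a probability density function on the unit interval. -/
/-!
The density is the derivative of the distribution function
`F(x) = (ω x^ω + η x^{2ω} (3 - 4ω log x)) / (ω + 3η)` on `(0, 1)`. Since `x^{2ω} log x → 0` as
`x → 0⁺`, `F` extends continuously to `[0, 1]` with `F 0 = 0` and `F 1 = 1`. The density is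
nonnegative, hence integrable as a nonnegative derivative, and the fundamental theorem of
calculus gives total mass `F 1 - F 0 = 1`.
-/

open Real Set

theorem continuousOn_log_mul_rpow {r : ℝ} (hr : 0 < r) :
    ContinuousOn (fun x => log x * x ^ r) (Ici 0) := by
  intro x hx
  rcases (mem_Ici.mp hx).eq_or_lt with rfl | hx₀
  · refine continuousWithinAt_Ioi_iff_Ici.mp ?_
    simpa [ContinuousWithinAt, zero_rpow hr.ne'] using tendsto_log_mul_rpow_nhdsGT_zero hr
  · exact ((continuousAt_log hx₀.ne').mul
      (continuousAt_rpow_const x r (Or.inl hx₀.ne'))).continuousWithinAt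

noncomputable def ushDensity (ω η x : ℝ) : ℝ :=
  ω / (ω + 3*η) * (ω * x ^ (ω-1) + (2*η - 8*ω*η*log x) * x ^ (2*ω-1))

noncomputable def ushCDF (ω η x : ℝ) : ℝ :=
  (ω * x ^ ω + η * x ^ (2*ω) * (3 - 4*ω*log x)) / (ω + 3*η)

variable {ω η x : ℝ}

theorem ushDensity_nonneg (hω : 0 ≤ ω) (hη : 0 ≤ η) (hx : x ∈ Ioc 0 1) :
    0 ≤ ushDensity ω η x := by
  have hlog : log x ≤ 0 := log_nonpos hx.1.le hx.2
  have hcoef : 0 ≤ 2*η - 8*ω*η*log x := by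
    nlinarith [mul_nonneg (mul_nonneg hω hη) (neg_nonneg.2 hlog)]
  have hpow (r : ℝ) : 0 ≤ x ^ r := rpow_nonneg hx.1.le r
  exact mul_nonneg (by positivity)
    (add_nonneg (mul_nonneg hω (hpow _)) (mul_nonneg hcoef (hpow _)))

theorem hasDerivAt_ushCDF (hx : x ≠ 0) : HasDerivAt (ushCDF ω η) (ushDensity ω η x) x := by
  have hpow : x ^ (2*ω) = x ^ (2*ω-1) * x := by
    rw [← rpow_add_one hx]
    ring_nf
  refine HasDerivAt.congr_deriv (f := ushCDF ω η)
    ((((hasDerivAt_rpow_const (Or.inl hx)).const_mul ω).add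
      (((hasDerivAt_rpow_const (Or.inl hx)).const_mul η).mul
        (((hasDerivAt_log hx).const_mul (4*ω)).const_sub 3))).div_const (ω + 3*η)) ?_
  rw [ushDensity, hpow]
  field_simp
  ring

theorem continuousOn_ushCDF (hω : 0 < ω) : ContinuousOn (ushCDF ω η) (Icc 0 1) := by
  have hrpow (r : ℝ) (hr : 0 < r) : ContinuousOn (fun x : ℝ => x ^ r) (Icc 0 1) :=
    fun x _ => (continuousAt_rpow_const x r (Or.inr hr.le)).continuousWithinAt
  have hlog : ContinuousOn (fun x => log x * x ^ (2*ω)) (Icc 0 1) :=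
    (continuousOn_log_mul_rpow (by positivity)).mono Icc_subset_Ici_self
  have hsplit : ushCDF ω η = fun x =>
      (ω * x ^ ω + 3*η * x ^ (2*ω) - 4*ω*η * (log x * x ^ (2*ω))) / (ω + 3*η) := by
    ext x
    rw [ushCDF]
    ring
  rw [hsplit]
  exact ((((hrpow ω hω).const_smul ω).add ((hrpow _ (by positivity)).const_smul (3*η))).sub
    (hlog.const_smul (4*ω*η))).div_const _

theorem ushCDF_zero (hω : 0 < ω) : ushCDF ω η 0 = 0 := by
  simp [ushCDF, zero_rpow hω.ne', zero_rpow (by positivity : 2*ω ≠ 0)]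

theorem ushCDF_one (hωη : ω + 3*η ≠ 0) : ushCDF ω η 1 = 1 := by
  rw [ushCDF, one_rpow, one_rpow, log_one, div_eq_one_iff_eq hωη]
  ring

theorem integral_ushDensity (hω : 0 < ω) (hη : 0 ≤ η) :
    ∫ x in (0:ℝ)..1, ushDensity ω η x = 1 := by
  have hderiv : ∀ x ∈ Ioo (0:ℝ) 1, HasDerivAt (ushCDF ω η) (ushDensity ω η x) x :=
    fun x hx => hasDerivAt_ushCDF hx.1.ne'
  have hint : IntervalIntegrable (ushDensity ω η) MeasureTheory.volume 0 1 :=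
    (intervalIntegrable_iff_integrableOn_Ioc_of_le zero_le_one).mpr <|
      intervalIntegral.integrableOn_deriv_of_nonneg (continuousOn_ushCDF hω) hderiv
        fun x hx => ushDensity_nonneg hω.le hη (Ioo_subset_Ioc_self hx)
  rw [intervalIntegral.integral_eq_sub_of_hasDerivAt_of_le zero_le_one (continuousOn_ushCDF hω)
    hderiv hint, ushCDF_one (by positivity), ushCDF_zero hω, sub_zero]

theorem ush_pdf_is_density (ω η : ℝ) (hω : 0 < ω) (hη : 0 < η) :
    (∀ x ∈ Set.Ioc (0:ℝ) 1,
      0 ≤ ω / (ω + 3*η) * (ω * x ^ (ω-1) + (2*η - 8*ω*η*Real.log x) * x ^ (2*ω-1))) ∧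
    ∫ x in (0:ℝ)..1,
      ω / (ω + 3*η) * (ω * x ^ (ω-1) + (2*η - 8*ω*η*Real.log x) * x ^ (2*ω-1)) = 1 :=
  ⟨fun _ hx => ushDensity_nonneg hω.le hη.le hx, integral_ushDensity hω hη.le⟩
end

section
/- Let X have the unit Shiha distribution USh(ω,η) with ω > 0, η > 0. Then for every natural number κ, the κ-th raw moment is E[X^κ] = (ω/(ω+3η))·[ω/(κ+ω) + 2η/(κ+2ω) + 8ωη/(κ+2ω)^2]. -/
open Real MeasureTheory intervalIntegral Set Filter

lemma ush_aux_rpow_int (a : ℝ) (ha : 0 < a) : ∫ x in (0:ℝ)..1, x ^ (a-1) = 1/a := by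
  rw [integral_rpow (Or.inl (by linarith)), sub_add_cancel, Real.one_rpow,
    Real.zero_rpow ha.ne', sub_zero]

lemma ush_aux_log_bound {a x : ℝ} (ha : 0 < a) (hx : x ∈ Set.Ioc (0:ℝ) 1) :
    |Real.log x| ≤ 2/a * x ^ (-(a/2)) := by
  have hx0 := hx.1
  rw [abs_of_nonpos (Real.log_nonpos hx0.le hx.2)]
  have h2 : -Real.log x = 2/a * Real.log (x ^ (-(a/2))) := by
    rw [Real.log_rpow hx0]; field_simp
  rw [h2]
  have h3 : (0:ℝ) < x ^ (-(a/2)) := Real.rpow_pos_of_pos hx0 _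
  have h4 : Real.log (x ^ (-(a/2))) ≤ x ^ (-(a/2)) := by
    nlinarith [Real.log_le_sub_one_of_pos h3]
  have h5 : (0:ℝ) < 2/a := by positivity
  nlinarith

lemma ush_aux_contOn (a : ℝ) :
    ContinuousOn (fun x : ℝ => Real.log x * x ^ (a-1)) (Set.Ioc 0 1) :=
  (Real.continuousOn_log.mono (fun x hx => Set.mem_compl_singleton_iff.mpr hx.1.ne')).mul
    (continuousOn_id.rpow_const (fun x hx => Or.inl hx.1.ne'))

lemma ush_aux_log_integrable (a : ℝ) (ha : 0 < a) :
    IntervalIntegrable (fun x => Real.log x * x ^ (a-1)) volume 0 1 := by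
  have hmaj : IntervalIntegrable (fun x => 2/a * x ^ (a/2 - 1)) volume 0 1 :=
    (intervalIntegrable_rpow' (by linarith)).const_mul _
  apply hmaj.mono_fun
  · rw [Set.uIoc_of_le (by norm_num : (0:ℝ) ≤ 1)]
    exact (ush_aux_contOn a).aestronglyMeasurable measurableSet_Ioc
  · rw [Filter.EventuallyLE, ae_restrict_iff' measurableSet_uIoc]
    apply Filter.Eventually.of_forall
    intro x hx
    rw [Set.uIoc_of_le (by norm_num : (0:ℝ) ≤ 1)] at hx
    have hx0 := hx.1
    have h1 : ‖Real.log x * x ^ (a-1)‖ = |Real.log x| * x ^ (a-1) := by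
      rw [norm_mul, Real.norm_eq_abs, Real.norm_eq_abs,
        abs_of_nonneg (Real.rpow_nonneg hx0.le _)]
    rw [h1]
    have h3 : x ^ (-(a/2)) * x ^ (a-1) = x ^ (a/2 - 1) := by
      rw [← Real.rpow_add hx0]; ring_nf
    calc |Real.log x| * x ^ (a-1)
        ≤ (2/a * x ^ (-(a/2))) * x ^ (a-1) :=
          mul_le_mul_of_nonneg_right (ush_aux_log_bound ha hx) (Real.rpow_nonneg hx0.le _)
      _ = 2/a * x ^ (a/2-1) := by rw [mul_assoc, h3]
      _ ≤ ‖2/a * x ^ (a/2-1)‖ := le_abs_self _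

lemma ush_aux_log_int (a : ℝ) (ha : 0 < a) :
    ∫ x in (0:ℝ)..1, Real.log x * x ^ (a-1) = -(1/a^2) := by
  set F : ℝ → ℝ := fun x => Real.log x * x ^ a / a - x ^ a / a^2 with hF
  have hderiv : ∀ x ∈ Set.Ioo (0:ℝ) 1, HasDerivAt F (Real.log x * x ^ (a-1)) x := by
    intro x hx
    have hx0 : (0:ℝ) < x := hx.1
    have h1 : HasDerivAt (fun y : ℝ => Real.log y * y ^ a)
        (x⁻¹ * x ^ a + Real.log x * (a * x ^ (a-1))) x :=
      (Real.hasDerivAt_log hx0.ne').mul (Real.hasDerivAt_rpow_const (Or.inl hx0.ne'))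
    have h2 : HasDerivAt F
        ((x⁻¹ * x ^ a + Real.log x * (a * x ^ (a-1)))/a - (a * x ^ (a-1))/a^2) x :=
      (h1.div_const a).sub ((Real.hasDerivAt_rpow_const (Or.inl hx0.ne')).div_const (a^2))
    convert h2 using 1
    have h3 : x⁻¹ * x ^ a = x ^ (a-1) := by
      rw [Real.rpow_sub hx0, Real.rpow_one, inv_mul_eq_div]
    rw [h3]
    field_simp
    ring
  have hint := ush_aux_log_integrable a ha
  have h0 : Filter.Tendsto F (nhdsWithin 0 (Set.Ioi 0)) (nhds 0) := by
    have t1 : Filter.Tendsto (fun x : ℝ => Real.log x * x ^ a) (nhdsWithin 0 (Set.Ioi 0))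
        (nhds 0) := tendsto_log_mul_rpow_nhdsGT_zero ha
    have t2 : Filter.Tendsto (fun x : ℝ => x ^ a) (nhdsWithin 0 (Set.Ioi 0)) (nhds 0) := by
      have := (Real.continuousAt_rpow_const 0 a (Or.inr ha.le)).tendsto
      rw [Real.zero_rpow ha.ne'] at this
      exact this.mono_left nhdsWithin_le_nhds
    have := (t1.div_const a).sub (t2.div_const (a^2))
    simpa using this
  have h1 : Filter.Tendsto F (nhdsWithin 1 (Set.Iio 1)) (nhds (-(1/a^2))) := by
    have hc : ContinuousAt F 1 := by
      apply ContinuousAt.sub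
      · exact (((Real.continuousAt_log one_ne_zero).mul
          (Real.continuousAt_rpow_const 1 a (Or.inl one_ne_zero))).div_const a)
      · exact (Real.continuousAt_rpow_const 1 a (Or.inl one_ne_zero)).div_const (a^2)
    have hF1 : F 1 = -(1/a^2) := by
      simp only [hF, Real.log_one, Real.one_rpow, zero_mul, zero_div, zero_sub]
    rw [← hF1]
    exact hc.tendsto.mono_left nhdsWithin_le_nhds
  have := integral_eq_sub_of_hasDerivAt_of_tendsto (by norm_num : (0:ℝ) < 1) hderiv hint h0 h1
  exact this.trans (by ring)

theorem ush_moments (ω η : ℝ) (hω : 0 < ω) (hη : 0 < η) (κ : ℕ) :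
    ∫ x in (0:ℝ)..1, x ^ κ *
      (ω / (ω + 3*η) * (ω * x ^ (ω-1) + (2*η - 8*ω*η*Real.log x) * x ^ (2*ω-1)))
    = ω / (ω + 3*η) * (ω / (κ + ω) + 2*η / (κ + 2*ω) + 8*ω*η / (κ + 2*ω) ^ 2) := by
  set A : ℝ := ω / (ω + 3*η) with hA
  have hκω : (0:ℝ) < κ + ω := by positivity
  have hκ2ω : (0:ℝ) < κ + 2*ω := by positivity
  have hcongr : ∫ x in (0:ℝ)..1, x ^ κ *
      (A * (ω * x ^ (ω-1) + (2*η - 8*ω*η*Real.log x) * x ^ (2*ω-1)))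
      = ∫ x in (0:ℝ)..1, (A * ω * x ^ ((κ:ℝ) + ω - 1) + A * (2*η) * x ^ ((κ:ℝ) + 2*ω - 1)
          + (-(A * (8*ω*η))) * (Real.log x * x ^ ((κ:ℝ) + 2*ω - 1))) := by
    apply intervalIntegral.integral_congr_ae
    apply Filter.Eventually.of_forall
    intro x hx
    rw [Set.uIoc_of_le (by norm_num : (0:ℝ) ≤ 1)] at hx
    have hx0 : (0:ℝ) < x := hx.1
    have hp : ∀ b : ℝ, (x:ℝ) ^ κ * x ^ (b - 1) = x ^ ((κ:ℝ) + b - 1) := by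
      intro b
      rw [← Real.rpow_natCast x κ, ← Real.rpow_add hx0]
      ring_nf
    rw [← hp ω, ← hp (2*ω)]
    ring
  have hcast : (0:ℝ) ≤ (κ:ℝ) := Nat.cast_nonneg κ
  have i1 : IntervalIntegrable (fun x : ℝ => x ^ ((κ:ℝ) + ω - 1)) volume 0 1 :=
    intervalIntegrable_rpow' (by linarith)
  have i2 : IntervalIntegrable (fun x : ℝ => x ^ ((κ:ℝ) + 2*ω - 1)) volume 0 1 :=
    intervalIntegrable_rpow' (by linarith)
  have i3 : IntervalIntegrable (fun x : ℝ => Real.log x * x ^ ((κ:ℝ) + 2*ω - 1)) volume 0 1 :=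
    ush_aux_log_integrable ((κ:ℝ) + 2*ω) hκ2ω
  rw [hcongr, intervalIntegral.integral_add ((i1.const_mul _).add (i2.const_mul _))
      (i3.const_mul _),
    intervalIntegral.integral_add (i1.const_mul _) (i2.const_mul _),
    intervalIntegral.integral_const_mul, intervalIntegral.integral_const_mul,
    intervalIntegral.integral_const_mul,
    ush_aux_rpow_int _ hκω, ush_aux_rpow_int _ hκ2ω, ush_aux_log_int _ hκ2ω]
  field_simp
end

section
/- Let X ~ USh(ω,η) with ω > 0, η > 0. Then E[X] = (ω/(ω+3η))·[ω/(1+ω) + 2η/(1+2ω) + 8ωη/(1+2ω)^2]. -/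
/-!
Multiplied by `x`, the density is a combination of `x ^ ω`, `x ^ (2ω)` and `log x * x ^ (2ω)`.
The last one has the primitive `x ^ (b+1) * ((b+1) log x - 1) / (b+1)^2` (with `b = 2ω`), which
extends continuously to `0` and gives `∫₀¹ log x * x ^ b = -1 / (b+1)^2`.
-/

open Real Set MeasureTheory

namespace Real

theorem continuousOn_log_mul_rpow {r : ℝ} (hr : 0 < r) :
    ContinuousOn (fun x => log x * x ^ r) (Ici 0) := by
  intro x hx
  rcases (mem_Ici.mp hx).eq_or_lt with rfl | hx0
  · rw [← continuousWithinAt_sdiff_self, ContinuousWithinAt, zero_rpow hr.ne', mul_zero]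
    exact (tendsto_log_mul_rpow_nhdsGT_zero hr).mono_left
      (nhdsWithin_mono _ fun y hy => lt_of_le_of_ne hy.1 (Ne.symm hy.2))
  · exact ((continuousAt_log hx0.ne').mul
      (continuousAt_rpow_const x r (Or.inl hx0.ne'))).continuousWithinAt

theorem hasDerivAt_log_mul_rpow_primitive {b x : ℝ} (hb : b + 1 ≠ 0) (hx : 0 < x) :
    HasDerivAt (fun x => x ^ (b + 1) * ((b + 1) * log x - 1) / (b + 1) ^ 2)
      (log x * x ^ b) x := by
  have hpow : HasDerivAt (fun x => x ^ (b + 1)) ((b + 1) * x ^ b) x := by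
    simpa using hasDerivAt_rpow_const (p := b + 1) (Or.inl hx.ne')
  refine ((hpow.mul (((hasDerivAt_log hx.ne').const_mul (b + 1)).sub_const 1)).div_const
    ((b + 1) ^ 2)).congr_deriv ?_
  rw [rpow_add_one hx.ne']
  field_simp
  ring

theorem continuousOn_log_mul_rpow_primitive {b : ℝ} (hb : -1 < b) :
    ContinuousOn (fun x => x ^ (b + 1) * ((b + 1) * log x - 1) / (b + 1) ^ 2) (Ici 0) := by
  have hb1 : 0 < b + 1 := by linarith
  have hpow : ContinuousOn (fun x : ℝ => x ^ (b + 1)) (Ici 0) := fun x _ =>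
    (continuousAt_rpow_const x (b + 1) (Or.inr hb1.le)).continuousWithinAt
  refine ((((continuousOn_log_mul_rpow hb1).const_mul (b + 1)).sub hpow).div_const
    ((b + 1) ^ 2)).congr fun x _ => ?_
  simp only [Pi.sub_apply]
  ring

theorem intervalIntegrable_log_mul_rpow {b : ℝ} (hb : -1 < b) :
    IntervalIntegrable (fun x => log x * x ^ b) volume 0 1 := by
  -- For `b ≤ 0` the integrand is unbounded near `0`; since it has a sign on `(0, 1)`, integrability
  -- follows from the continuity of its primitive on `[0, 1]`.
  have hb1 : b + 1 ≠ 0 := by linarith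
  have hIoo : ∀ x ∈ Ioo (min (0 : ℝ) 1) (max 0 1), 0 < x ∧ x < 1 := by simp
  have hcont : ContinuousOn (fun x => -(x ^ (b + 1) * ((b + 1) * log x - 1) / (b + 1) ^ 2))
      (uIcc 0 1) := by
    rw [uIcc_of_le zero_le_one]
    exact ((continuousOn_log_mul_rpow_primitive hb).mono Icc_subset_Ici_self).neg
  have hnonneg : ∀ x ∈ Ioo (min (0 : ℝ) 1) (max 0 1), 0 ≤ -(log x * x ^ b) := fun x hx =>
    neg_nonneg.mpr (mul_nonpos_of_nonpos_of_nonneg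
      (log_nonpos (hIoo x hx).1.le (hIoo x hx).2.le) (rpow_nonneg (hIoo x hx).1.le b))
  simpa [Pi.neg_def] using (intervalIntegral.intervalIntegrable_deriv_of_nonneg hcont
    (fun x hx => (hasDerivAt_log_mul_rpow_primitive hb1 (hIoo x hx).1).neg) hnonneg).neg

theorem integral_log_mul_rpow {b : ℝ} (hb : -1 < b) :
    ∫ x in (0 : ℝ)..1, log x * x ^ b = -1 / (b + 1) ^ 2 := by
  have hb1 : b + 1 ≠ 0 := by linarith
  rw [intervalIntegral.integral_eq_sub_of_hasDerivAt_of_le zero_le_one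
    ((continuousOn_log_mul_rpow_primitive hb).mono Icc_subset_Ici_self)
    (fun x hx => hasDerivAt_log_mul_rpow_primitive hb1 hx.1)
    (intervalIntegrable_log_mul_rpow hb)]
  simp [zero_rpow hb1]

theorem self_mul_rpow_sub_one {x s : ℝ} (hx : 0 ≤ x) (hs : s ≠ 0) : x * x ^ (s - 1) = x ^ s := by
  conv_rhs => rw [← sub_add_cancel s 1, rpow_add' hx (by simpa using hs), rpow_one, mul_comm]

end Real

theorem ush_mean_general (ω η : ℝ) (hω : 0 < ω) :
    ∫ x in (0:ℝ)..1, x *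
      (ω / (ω + 3*η) * (ω * x ^ (ω-1) + (2*η - 8*ω*η*Real.log x) * x ^ (2*ω-1)))
    = ω / (ω + 3*η) * (ω / (1 + ω) + 2*η / (1 + 2*ω) + 8*ω*η / (1 + 2*ω) ^ 2) := by
  set c := ω / (ω + 3*η)
  have h2ω : 0 < 2 * ω := by positivity
  have hmoment : ∀ x ∈ uIcc (0 : ℝ) 1, x *
      (c * (ω * x ^ (ω-1) + (2*η - 8*ω*η*Real.log x) * x ^ (2*ω-1)))
      = c * (ω * x ^ ω + 2*η * x ^ (2*ω) - 8*ω*η * (log x * x ^ (2*ω))) := by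
    intro x hx
    have hx0 : 0 ≤ x := by rw [uIcc_of_le zero_le_one] at hx; exact hx.1
    calc _ = c * (ω * (x * x ^ (ω-1)) + 2*η * (x * x ^ (2*ω-1))
          - 8*ω*η * (log x * (x * x ^ (2*ω-1)))) := by ring
      _ = _ := by rw [self_mul_rpow_sub_one hx0 hω.ne', self_mul_rpow_sub_one hx0 h2ω.ne']
  have hpow : IntervalIntegrable (fun x => ω * x ^ ω) volume 0 1 :=
    (intervalIntegral.intervalIntegrable_rpow' (by linarith)).const_mul ω
  have hpow2 : IntervalIntegrable (fun x => 2*η * x ^ (2*ω)) volume 0 1 :=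
    (intervalIntegral.intervalIntegrable_rpow' (by linarith)).const_mul (2*η)
  have hlog : IntervalIntegrable (fun x => 8*ω*η * (log x * x ^ (2*ω))) volume 0 1 :=
    (intervalIntegrable_log_mul_rpow (by linarith)).const_mul (8*ω*η)
  rw [intervalIntegral.integral_congr hmoment, intervalIntegral.integral_const_mul,
    intervalIntegral.integral_sub (hpow.add hpow2) hlog, intervalIntegral.integral_add hpow hpow2,
    intervalIntegral.integral_const_mul, intervalIntegral.integral_const_mul,
    intervalIntegral.integral_const_mul, integral_rpow (by left; linarith),
    integral_rpow (by left; linarith), integral_log_mul_rpow (by linarith)]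
  have h1 : ω + 1 ≠ 0 := by positivity
  have h2 : 2 * ω + 1 ≠ 0 := by positivity
  rw [one_rpow, one_rpow, zero_rpow h1, zero_rpow h2]
  field_simp
  ring

theorem ush_mean (ω η : ℝ) (hω : 0 < ω) (hη : 0 < η) :
    ∫ x in (0:ℝ)..1, x *
      (ω / (ω + 3*η) * (ω * x ^ (ω-1) + (2*η - 8*ω*η*Real.log x) * x ^ (2*ω-1)))
    = ω / (ω + 3*η) * (ω / (1 + ω) + 2*η / (1 + 2*ω) + 8*ω*η / (1 + 2*ω) ^ 2) :=
  ush_mean_general ω η hω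
end

section
/- Let ω₁, ω₂, η₁, η₂ > 0. Then ∫₀¹ f(x;ω₁,η₁)·F(x;ω₂,η₂) dx = (ω₁/((ω₁+3η₁)(ω₂+3η₂)))·[ω₁ω₂/(ω₁+ω₂) + ω₂η₁·(2/(2ω₁+ω₂) + 8ω₁/(2ω₁+ω₂)²) + ω₁η₂·(3/(ω₁+2ω₂) + 4ω₂/(ω₁+2ω₂)²) + η₁η₂·(6/(2ω₁+2ω₂) + (24ω₁+8ω₂)/(2ω₁+2ω₂)² + 64ω₁ω₂/(2ω₁+2ω₂)³)]. -/
/-!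
The substitution `x = exp (-t)` turns `∫₀¹ x ^ a * (log x) ^ k` into the Gamma integral
`(-1) ^ k * ∫₀^∞ t ^ k * exp (-(a + 1) * t) = (-1) ^ k * k! / (a + 1) ^ (k + 1)`.
Up to its constant, the integrand `f(x; ω₁, η₁) * F(x; ω₂, η₂)` is a sum of four terms
`x ^ (s - 1) * (c₀ + c₁ * log x + c₂ * log x ^ 2)`, with `s` running over `ω₁ + ω₂`,
`2ω₁ + ω₂`, `ω₁ + 2ω₂` and `2ω₁ + 2ω₂`, each of which integrates to `c₀/s - c₁/s² + 2c₂/s³`.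
-/

open Real Set MeasureTheory
open scoped Nat

lemma integral_pow_mul_exp_neg_mul_Ioi (k : ℕ) {r : ℝ} (hr : 0 < r) :
    ∫ t in Ioi (0:ℝ), t ^ k * exp (-(r * t)) = k ! / r ^ (k + 1) := by
  have key := integral_rpow_mul_exp_neg_mul_Ioi (a := k + 1) (by positivity) hr
  simp only [add_sub_cancel_right, rpow_natCast] at key
  rw [key, Gamma_nat_eq_factorial, one_div, inv_rpow hr.le, ← Nat.cast_succ, rpow_natCast]
  field_simp

lemma integral_Ioc_zero_one_eq_integral_Ioi_comp_exp_neg (g : ℝ → ℝ) :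
    ∫ x in Ioc (0:ℝ) 1, g x = ∫ t in Ioi (0:ℝ), exp (-t) * g (exp (-t)) := by
  rw [← exp_zero, ← image_exp_Iic, integral_image_eq_integral_abs_deriv_smul measurableSet_Iic
    (fun u _ => (hasDerivAt_exp u).hasDerivWithinAt) exp_injective.injOn g,
    ← neg_zero, ← integral_comp_neg_Ioi]
  simp only [abs_of_pos (exp_pos _), smul_eq_mul, neg_zero]

lemma integral_rpow_mul_log_pow {a : ℝ} (ha : -1 < a) (k : ℕ) :
    ∫ x in (0:ℝ)..1, x ^ a * log x ^ k = (-1) ^ k * k ! / (a + 1) ^ (k + 1) := by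
  rw [intervalIntegral.integral_of_le zero_le_one,
    integral_Ioc_zero_one_eq_integral_Ioi_comp_exp_neg]
  have h : ∀ t : ℝ, exp (-t) * ((exp (-t)) ^ a * log (exp (-t)) ^ k)
      = (-1) ^ k * (t ^ k * exp (-((a + 1) * t))) := by
    intro t
    have hexp : exp (-t) * exp (-t * a) = exp (-((a + 1) * t)) := by rw [← exp_add]; ring_nf
    rw [log_exp, ← exp_mul, neg_pow, ← hexp]
    ring
  simp_rw [h]
  rw [integral_const_mul, integral_pow_mul_exp_neg_mul_Ioi k (by linarith)]
  ring

lemma intervalIntegrable_rpow_mul_log_pow {a : ℝ} (ha : -1 < a) (k : ℕ) :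
    IntervalIntegrable (fun x => x ^ a * log x ^ k) volume 0 1 := by
  rw [intervalIntegrable_iff_integrableOn_Ioc_of_le zero_le_one]
  -- a non-integrable function has Bochner integral `0`
  refine Integrable.of_integral_ne_zero ?_
  rw [← intervalIntegral.integral_of_le zero_le_one, integral_rpow_mul_log_pow ha]
  have : 0 < a + 1 := by linarith
  positivity

lemma rpow_mul_quadratic_log_eq (a c₀ c₁ c₂ : ℝ) :
    (fun x : ℝ => x ^ a * (c₀ + c₁ * log x + c₂ * log x ^ 2)) =
      fun x => c₀ * (x ^ a * log x ^ 0) + c₁ * (x ^ a * log x ^ 1) + c₂ * (x ^ a * log x ^ 2) := by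
  funext x
  ring

lemma intervalIntegrable_rpow_sub_one_mul_quadratic_log {s : ℝ} (hs : 0 < s) (c₀ c₁ c₂ : ℝ) :
    IntervalIntegrable (fun x => x ^ (s - 1) * (c₀ + c₁ * log x + c₂ * log x ^ 2)) volume 0 1 := by
  have hm := intervalIntegrable_rpow_mul_log_pow (a := s - 1) (by linarith)
  rw [rpow_mul_quadratic_log_eq]
  exact (((hm 0).const_mul c₀).add ((hm 1).const_mul c₁)).add ((hm 2).const_mul c₂)

lemma integral_rpow_sub_one_mul_quadratic_log {s : ℝ} (hs : 0 < s) (c₀ c₁ c₂ : ℝ) :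
    ∫ x in (0:ℝ)..1, x ^ (s - 1) * (c₀ + c₁ * log x + c₂ * log x ^ 2)
      = c₀ / s - c₁ / s ^ 2 + 2 * c₂ / s ^ 3 := by
  have ha : -1 < s - 1 := by linarith
  have hm := intervalIntegrable_rpow_mul_log_pow ha
  rw [rpow_mul_quadratic_log_eq, intervalIntegral.integral_add
      (((hm 0).const_mul c₀).add ((hm 1).const_mul c₁)) ((hm 2).const_mul c₂),
    intervalIntegral.integral_add ((hm 0).const_mul c₀) ((hm 1).const_mul c₁)]
  simp only [intervalIntegral.integral_const_mul, integral_rpow_mul_log_pow ha, sub_add_cancel]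
  norm_num
  ring

lemma rpow_add_sub_one {x : ℝ} (hx : 0 < x) (a b : ℝ) : x ^ (a + b - 1) = x ^ (a - 1) * x ^ b := by
  rw [← rpow_add hx]
  ring_nf

lemma integral_ush_density_mul_cdf_unnormalized {ω₁ ω₂ : ℝ} (hω₁ : 0 < ω₁) (hω₂ : 0 < ω₂)
    (η₁ η₂ : ℝ) :
    ∫ x in (0:ℝ)..1, (ω₁ * x ^ (ω₁-1) + (2*η₁ - 8*ω₁*η₁*log x) * x ^ (2*ω₁-1)) *
      (ω₂ * x ^ ω₂ + (3*η₂ - 4*ω₂*η₂*log x) * x ^ (2*ω₂))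
    = ω₁*ω₂ / (ω₁ + ω₂)
        + ω₂*η₁ * (2 / (2*ω₁ + ω₂) + 8*ω₁ / (2*ω₁ + ω₂) ^ 2)
        + ω₁*η₂ * (3 / (ω₁ + 2*ω₂) + 4*ω₂ / (ω₁ + 2*ω₂) ^ 2)
        + η₁*η₂ * (6 / (2*ω₁ + 2*ω₂) + (24*ω₁ + 8*ω₂) / (2*ω₁ + 2*ω₂) ^ 2
            + 64*ω₁*ω₂ / (2*ω₁ + 2*ω₂) ^ 3) := by
  have hs₁ : 0 < ω₁ + ω₂ := by positivity
  have hs₂ : 0 < 2*ω₁ + ω₂ := by positivity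
  have hs₃ : 0 < ω₁ + 2*ω₂ := by positivity
  have hs₄ : 0 < 2*ω₁ + 2*ω₂ := by positivity
  have i₁ := intervalIntegrable_rpow_sub_one_mul_quadratic_log hs₁ (ω₁*ω₂) 0 0
  have i₂ := intervalIntegrable_rpow_sub_one_mul_quadratic_log hs₂ (2*ω₂*η₁) (-(8*ω₁*ω₂*η₁)) 0
  have i₃ := intervalIntegrable_rpow_sub_one_mul_quadratic_log hs₃ (3*ω₁*η₂) (-(4*ω₁*ω₂*η₂)) 0
  have i₄ := intervalIntegrable_rpow_sub_one_mul_quadratic_log hs₄ (6*η₁*η₂)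
    (-((24*ω₁ + 8*ω₂)*η₁*η₂)) (32*ω₁*ω₂*η₁*η₂)
  rw [intervalIntegral.integral_congr_ae (g := fun x => _ + _) ?expand,
    intervalIntegral.integral_add (i₁.add i₂) (i₃.add i₄), intervalIntegral.integral_add i₁ i₂,
    intervalIntegral.integral_add i₃ i₄, integral_rpow_sub_one_mul_quadratic_log hs₁,
    integral_rpow_sub_one_mul_quadratic_log hs₂, integral_rpow_sub_one_mul_quadratic_log hs₃,
    integral_rpow_sub_one_mul_quadratic_log hs₄]
  case expand =>
    refine Filter.Eventually.of_forall fun x hx => ?_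
    rw [uIoc_of_le zero_le_one] at hx
    simp only [rpow_add_sub_one hx.1]
    ring
  field_simp
  ring

theorem ush_stress_strength_general_general (ω₁ ω₂ η₁ η₂ : ℝ)
    (hω₁ : 0 < ω₁) (hω₂ : 0 < ω₂) :
    ∫ x in (0:ℝ)..1,
      (ω₁ / (ω₁ + 3*η₁) * (ω₁ * x ^ (ω₁-1) + (2*η₁ - 8*ω₁*η₁*Real.log x) * x ^ (2*ω₁-1))) *
      (1 / (ω₂ + 3*η₂) * (ω₂ * x ^ ω₂ + (3*η₂ - 4*ω₂*η₂*Real.log x) * x ^ (2*ω₂)))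
    = ω₁ / ((ω₁ + 3*η₁) * (ω₂ + 3*η₂)) *
      (ω₁*ω₂ / (ω₁ + ω₂)
        + ω₂*η₁ * (2 / (2*ω₁ + ω₂) + 8*ω₁ / (2*ω₁ + ω₂) ^ 2)
        + ω₁*η₂ * (3 / (ω₁ + 2*ω₂) + 4*ω₂ / (ω₁ + 2*ω₂) ^ 2)
        + η₁*η₂ * (6 / (2*ω₁ + 2*ω₂) + (24*ω₁ + 8*ω₂) / (2*ω₁ + 2*ω₂) ^ 2
            + 64*ω₁*ω₂ / (2*ω₁ + 2*ω₂) ^ 3)) := by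
  calc _ = ∫ x in (0:ℝ)..1, ω₁ / (ω₁ + 3*η₁) * (1 / (ω₂ + 3*η₂)) *
          ((ω₁ * x ^ (ω₁-1) + (2*η₁ - 8*ω₁*η₁*log x) * x ^ (2*ω₁-1)) *
            (ω₂ * x ^ ω₂ + (3*η₂ - 4*ω₂*η₂*log x) * x ^ (2*ω₂))) := by
        congr 1
        funext x
        ring
    _ = _ := by
        rw [intervalIntegral.integral_const_mul, div_mul_div_comm, mul_one,
          integral_ush_density_mul_cdf_unnormalized hω₁ hω₂]

theorem ush_stress_strength_general (ω₁ ω₂ η₁ η₂ : ℝ)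
    (hω₁ : 0 < ω₁) (hω₂ : 0 < ω₂) (hη₁ : 0 < η₁) (hη₂ : 0 < η₂) :
    ∫ x in (0:ℝ)..1,
      (ω₁ / (ω₁ + 3*η₁) * (ω₁ * x ^ (ω₁-1) + (2*η₁ - 8*ω₁*η₁*Real.log x) * x ^ (2*ω₁-1))) *
      (1 / (ω₂ + 3*η₂) * (ω₂ * x ^ ω₂ + (3*η₂ - 4*ω₂*η₂*Real.log x) * x ^ (2*ω₂)))
    = ω₁ / ((ω₁ + 3*η₁) * (ω₂ + 3*η₂)) *
      (ω₁*ω₂ / (ω₁ + ω₂)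
        + ω₂*η₁ * (2 / (2*ω₁ + ω₂) + 8*ω₁ / (2*ω₁ + ω₂) ^ 2)
        + ω₁*η₂ * (3 / (ω₁ + 2*ω₂) + 4*ω₂ / (ω₁ + 2*ω₂) ^ 2)
        + η₁*η₂ * (6 / (2*ω₁ + 2*ω₂) + (24*ω₁ + 8*ω₂) / (2*ω₁ + 2*ω₂) ^ 2
            + 64*ω₁*ω₂ / (2*ω₁ + 2*ω₂) ^ 3)) :=
  ush_stress_strength_general_general ω₁ ω₂ η₁ η₂ hω₁ hω₂
end

section
/- Let X ~ USh(ω,η) with ω > 0, η > 0. For every real t, E[e^{tX}] = (ω/(ω+3η))·Σ_{κ=0}^∞ (t^κ/κ!)·[ω/(κ+ω) + 2η/(κ+2ω) + 8ωη/(κ+2ω)²], and this series converges absolutely. -/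
/-!
On `(0, 1]` the terms of the exponential series satisfy `|t^κ x^κ / κ! · f x| ≤ |t|^κ / κ! · |f x|`,
so the series may be integrated term by term against the density `f`; this gives both the
absolute convergence and the value `∑ t^κ / κ! · E[X^κ]`. The moments reduce to
`∫₀¹ x^(a-1) = 1/a` and `∫₀¹ log x · x^(a-1) = -1/a²`; for the latter,
`(x^a log x^a - x^a) / a²` is an antiderivative that stays continuous at `0` since `y log y → 0`.
-/

open Real MeasureTheory Set intervalIntegral
open scoped Interval

section UnitInterval

variable {a : ℝ}

lemma integral_rpow_sub_one_zero_one (ha : 0 < a) :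
    ∫ x in (0:ℝ)..1, x ^ (a - 1) = 1 / a := by
  rw [integral_rpow (Or.inl (by linarith)), sub_add_cancel, one_rpow, zero_rpow ha.ne', sub_zero]

lemma hasDerivAt_mul_log_rpow_sub_rpow (ha : a ≠ 0) {x : ℝ} (hx : 0 < x) :
    HasDerivAt (fun y => (y ^ a * log (y ^ a) - y ^ a) / a ^ 2) (log x * x ^ (a - 1)) x := by
  have h := (((hasDerivAt_mul_log (rpow_pos_of_pos hx a).ne').sub (hasDerivAt_id _)).comp x
    (hasDerivAt_rpow_const (p := a) (Or.inl hx.ne'))).div_const (a ^ 2)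
  refine h.congr_deriv ?_
  rw [add_sub_cancel_right, log_rpow hx]
  field_simp

lemma continuous_mul_log_rpow_sub_rpow (ha : 0 ≤ a) :
    Continuous fun y : ℝ => (y ^ a * log (y ^ a) - y ^ a) / a ^ 2 :=
  ((continuous_mul_log.sub continuous_id).comp (continuous_rpow_const ha)).div_const _

lemma intervalIntegrable_log_mul_rpow_sub_one (ha : 0 < a) :
    IntervalIntegrable (fun x => log x * x ^ (a - 1)) volume 0 1 := by
  rw [intervalIntegrable_iff_integrableOn_Ioc_of_le zero_le_one]
  have h := integrableOn_deriv_of_nonneg (continuous_mul_log_rpow_sub_rpow ha.le).neg.continuousOn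
    (fun x hx => (hasDerivAt_mul_log_rpow_sub_rpow ha.ne' hx.1).neg)
    (fun x hx => neg_nonneg.2 (mul_nonpos_of_nonpos_of_nonneg (log_nonpos hx.1.le hx.2.le)
      (rpow_nonneg hx.1.le _)))
  simpa using h.neg

lemma integral_log_mul_rpow_sub_one (ha : 0 < a) :
    ∫ x in (0:ℝ)..1, log x * x ^ (a - 1) = -(1 / a ^ 2) := by
  rw [integral_eq_sub_of_hasDerivAt_of_le zero_le_one
    (continuous_mul_log_rpow_sub_rpow ha.le).continuousOn
    (fun x hx => hasDerivAt_mul_log_rpow_sub_rpow ha.ne' hx.1)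
    (intervalIntegrable_log_mul_rpow_sub_one ha)]
  simp [zero_rpow ha.ne']
  ring

end UnitInterval

section MomentSeries

open scoped Nat

variable {μ : Measure ℝ} {g : ℝ → ℝ}

lemma integrable_pow_mul_of_abs_le_one (hg : Integrable g μ) (hμ : ∀ᵐ x ∂μ, |x| ≤ 1) (κ : ℕ) :
    Integrable (fun x => x ^ κ * g x) μ :=
  hg.bdd_mul (by fun_prop) (hμ.mono fun x hx => by
    rw [norm_pow, Real.norm_eq_abs]; exact pow_le_one₀ (abs_nonneg x) hx)

lemma summable_integral_norm_pow_div_factorial_mul (hg : Integrable g μ)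
    (hμ : ∀ᵐ x ∂μ, |x| ≤ 1) (t : ℝ) :
    Summable fun κ : ℕ => ∫ x, ‖t ^ κ / κ ! * (x ^ κ * g x)‖ ∂μ := by
  refine Summable.of_nonneg_of_le (fun κ => integral_nonneg fun _ => norm_nonneg _) (fun κ => ?_)
    ((summable_pow_div_factorial ‖t‖).mul_right (∫ x, ‖g x‖ ∂μ))
  have hpow : ∫ x, ‖x ^ κ * g x‖ ∂μ ≤ ∫ x, ‖g x‖ ∂μ :=
    integral_mono_ae (integrable_pow_mul_of_abs_le_one hg hμ κ).norm hg.norm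
      (hμ.mono fun x hx => by
        dsimp only
        rw [norm_mul, norm_pow, Real.norm_eq_abs]
        exact mul_le_of_le_one_left (norm_nonneg _) (pow_le_one₀ (abs_nonneg x) hx))
  simp_rw [norm_mul (t ^ κ / κ !), MeasureTheory.integral_const_mul, norm_div, norm_pow,
    Real.norm_natCast]
  gcongr

theorem hasSum_integral_exp_mul (hg : Integrable g μ) (hμ : ∀ᵐ x ∂μ, |x| ≤ 1) (t : ℝ) :
    HasSum (fun κ : ℕ => t ^ κ / κ ! * ∫ x, x ^ κ * g x ∂μ) (∫ x, exp (t * x) * g x ∂μ) := by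
  have hexp : ∀ x, ∑' κ : ℕ, t ^ κ / κ ! * (x ^ κ * g x) = exp (t * x) * g x := fun x => by
    have hterm : ∀ κ : ℕ, t ^ κ / κ ! * (x ^ κ * g x) = (t * x) ^ κ / κ ! * g x :=
      fun κ => by ring
    simp_rw [hterm, exp_eq_exp_ℝ]
    exact ((NormedSpace.expSeries_div_hasSum_exp (t * x)).mul_right (g x)).tsum_eq
  simpa only [MeasureTheory.integral_const_mul, hexp] using
    hasSum_integral_of_summable_integral_norm
      (fun κ => (integrable_pow_mul_of_abs_le_one hg hμ κ).const_mul _)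
      (summable_integral_norm_pow_div_factorial_mul hg hμ t)

theorem summable_abs_pow_div_factorial_mul_integral (hg : Integrable g μ)
    (hμ : ∀ᵐ x ∂μ, |x| ≤ 1) (t : ℝ) :
    Summable fun κ : ℕ => |t ^ κ / κ ! * ∫ x, x ^ κ * g x ∂μ| :=
  (summable_integral_norm_pow_div_factorial_mul hg hμ t).of_norm_bounded fun κ => by
    rw [norm_abs_eq_norm, ← MeasureTheory.integral_const_mul]
    exact norm_integral_le_integral_norm _

end MomentSeries

/-- The USh density without its normalising factor `ω / (ω + 3η)`. -/
noncomputable def ushWeight (ω η x : ℝ) : ℝ :=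
  ω * x ^ (ω - 1) + (2 * η - 8 * ω * η * log x) * x ^ (2 * ω - 1)

lemma intervalIntegrable_ushWeight {ω : ℝ} (hω : 0 < ω) (η : ℝ) :
    IntervalIntegrable (ushWeight ω η) volume 0 1 := by
  have h := ((intervalIntegrable_rpow' (by linarith : -1 < ω - 1)).const_mul ω).add
    (((intervalIntegrable_rpow' (by linarith : -1 < 2 * ω - 1)).const_mul (2 * η)).sub
      ((intervalIntegrable_log_mul_rpow_sub_one (by positivity : 0 < 2 * ω)).const_mul
        (8 * ω * η)))
  convert h using 1
  funext x
  simp only [ushWeight]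
  ring

lemma integral_rpow_mul_ushWeight {ω η s : ℝ} (h₁ : 0 < s + ω) (h₂ : 0 < s + 2 * ω) :
    ∫ x in (0:ℝ)..1, x ^ s * ushWeight ω η x =
      ω / (s + ω) + 2 * η / (s + 2 * ω) + 8 * ω * η / (s + 2 * ω) ^ 2 := by
  have hsplit : ∀ x ∈ Ι (0:ℝ) 1, x ^ s * ushWeight ω η x =
      ω * x ^ (s + ω - 1) + 2 * η * x ^ (s + 2 * ω - 1) -
        8 * ω * η * (log x * x ^ (s + 2 * ω - 1)) := by
    intro x hx
    rw [uIoc_of_le zero_le_one] at hx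
    have hrpow : ∀ b, x ^ (s + b - 1) = x ^ s * x ^ (b - 1) := fun b => by
      rw [← rpow_add hx.1]; ring_nf
    rw [hrpow, hrpow, ushWeight]
    ring
  have hi₁ := intervalIntegrable_rpow' (a := 0) (b := 1) (by linarith : -1 < s + ω - 1)
  have hi₂ := intervalIntegrable_rpow' (a := 0) (b := 1) (by linarith : -1 < s + 2 * ω - 1)
  have hi₃ := intervalIntegrable_log_mul_rpow_sub_one h₂
  rw [integral_congr_ae (ae_of_all _ hsplit), integral_sub ((hi₁.const_mul _).add
    (hi₂.const_mul _)) (hi₃.const_mul _), integral_add (hi₁.const_mul _) (hi₂.const_mul _),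
    intervalIntegral.integral_const_mul, intervalIntegral.integral_const_mul,
    intervalIntegral.integral_const_mul, integral_rpow_sub_one_zero_one h₁,
    integral_rpow_sub_one_zero_one h₂, integral_log_mul_rpow_sub_one h₂]
  ring

theorem ush_mgf_general (ω η t : ℝ) (hω : 0 < ω) :
    Summable (fun κ : ℕ =>
      |t ^ κ / (κ.factorial : ℝ) *
        (ω / (κ + ω) + 2*η / (κ + 2*ω) + 8*ω*η / (κ + 2*ω) ^ 2)|) ∧
    ∫ x in (0:ℝ)..1, Real.exp (t * x) *
        (ω / (ω + 3*η) * (ω * x ^ (ω-1) + (2*η - 8*ω*η*Real.log x) * x ^ (2*ω-1)))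
    = ω / (ω + 3*η) * ∑' κ : ℕ, t ^ κ / (κ.factorial : ℝ) *
        (ω / (κ + ω) + 2*η / (κ + 2*ω) + 8*ω*η / (κ + 2*ω) ^ 2) := by
  have hweight : IntegrableOn (ushWeight ω η) (Ioc 0 1) :=
    (intervalIntegrable_ushWeight hω η).1
  have hμ : ∀ᵐ x ∂volume.restrict (Ioc (0:ℝ) 1), |x| ≤ 1 :=
    ae_restrict_of_forall_mem measurableSet_Ioc fun x hx => abs_le.2 ⟨by linarith [hx.1], hx.2⟩
  have hmoment : ∀ κ : ℕ, ∫ x in Ioc 0 1, x ^ κ * ushWeight ω η x =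
      ω / (κ + ω) + 2 * η / (κ + 2 * ω) + 8 * ω * η / (κ + 2 * ω) ^ 2 := fun κ => by
    rw [← integral_of_le zero_le_one]
    simpa only [rpow_natCast] using
      integral_rpow_mul_ushWeight (η := η) (s := κ) (by positivity) (by positivity)
  refine ⟨by simpa only [hmoment] using
    summable_abs_pow_div_factorial_mul_integral hweight hμ t, ?_⟩
  change ∫ x in (0:ℝ)..1, exp (t * x) * (ω / (ω + 3 * η) * ushWeight ω η x) = _
  simp_rw [integral_of_le zero_le_one, mul_left_comm (exp _), MeasureTheory.integral_const_mul,
    ← (hasSum_integral_exp_mul hweight hμ t).tsum_eq, hmoment]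

theorem ush_mgf (ω η t : ℝ) (hω : 0 < ω) (hη : 0 < η) :
    Summable (fun κ : ℕ =>
      |t ^ κ / (κ.factorial : ℝ) *
        (ω / (κ + ω) + 2*η / (κ + 2*ω) + 8*ω*η / (κ + 2*ω) ^ 2)|) ∧
    ∫ x in (0:ℝ)..1, Real.exp (t * x) *
        (ω / (ω + 3*η) * (ω * x ^ (ω-1) + (2*η - 8*ω*η*Real.log x) * x ^ (2*ω-1)))
    = ω / (ω + 3*η) * ∑' κ : ℕ, t ^ κ / (κ.factorial : ℝ) *
        (ω / (κ + ω) + 2*η / (κ + 2*ω) + 8*ω*η / (κ + 2*ω) ^ 2) :=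
  ush_mgf_general ω η t hω
end

section
/- Let Y have the Shiha density f_Y(y) = (ω/(ω+3η))·[ω + (2η + 8ωη·y)·e^{−ωy}]·e^{−ωy} for y ≥ 0, with ω, η > 0. Then X = e^{−Y} has density f_X(x) = (ω/(ω+3η))·[ω·x^(ω−1) + (2η − 8ωη·ln x)·x^(2ω−1)] on (0,1]. -/
/-!
The map `y ↦ e^{-y}` is a diffeomorphism of `ℝ` onto `(0, ∞)` with inverse `x ↦ -log x`, so the
pushforward of any density `g` is `g (-log x) / x` on `(0, ∞)`. For the Shiha density,
`e^{-ω y} = x ^ ω` at `y = -log x`, and the constraint `y ≥ 0` becomes `x ≤ 1`.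
-/

open MeasureTheory Real

open scoped ENNReal

lemma range_exp_neg : Set.range (fun y : ℝ => exp (-y)) = Set.Ioi 0 := by
  rw [← range_exp, ← Function.comp_def, Set.range_comp, neg_surjective.range_eq, Set.image_univ]

lemma map_exp_neg_withDensity (g : ℝ → ℝ≥0∞) :
    (volume.withDensity g).map (fun y => exp (-y)) =
      volume.withDensity ((Set.Ioi 0).indicator fun x => g (-log x) * ENNReal.ofReal x⁻¹) := by
  have hmeas : Measurable fun y : ℝ => exp (-y) := by fun_prop
  have hinj : Function.Injective fun y : ℝ => exp (-y) :=
    exp_injective.comp neg_injective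
  ext s hs
  rw [Measure.map_apply hmeas hs, withDensity_apply _ (hmeas hs), withDensity_apply _ hs,
    setLIntegral_indicator measurableSet_Ioi, Set.inter_comm, ← range_exp_neg,
    ← Set.image_preimage_eq_inter_range,
    lintegral_image_eq_lintegral_abs_deriv_mul (hmeas hs)
      (fun y _ => ((hasDerivAt_neg y).exp).hasDerivWithinAt) hinj.injOn]
  refine setLIntegral_congr_fun (hmeas hs) fun y _ => ?_
  rw [log_exp, neg_neg, mul_left_comm, ← ENNReal.ofReal_mul (abs_nonneg _), mul_neg, mul_one,
    abs_neg, abs_of_pos (exp_pos _), mul_inv_cancel₀ (exp_pos _).ne', ENNReal.ofReal_one, mul_one]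

noncomputable def shihaPDF (ω η y : ℝ) : ℝ :=
  ω / (ω + 3*η) * (ω + (2*η + 8*ω*η*y) * exp (-ω*y)) * exp (-ω*y)

noncomputable def ushPDF (ω η x : ℝ) : ℝ :=
  ω / (ω + 3*η) * (ω * x ^ (ω-1) + (2*η - 8*ω*η*log x) * x ^ (2*ω-1))

lemma shihaPDF_neg_log_mul_inv (ω η : ℝ) {x : ℝ} (hx : 0 < x) :
    shihaPDF ω η (-log x) * x⁻¹ = ushPDF ω η x := by
  have hpow : exp (-ω * -log x) = x ^ ω := by
    rw [rpow_def_of_pos hx, neg_mul_neg, mul_comm]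
  have hpow₂ : x ^ (2*ω - 1) = x ^ ω * x ^ ω * x⁻¹ := by
    rw [rpow_sub_one hx.ne', two_mul, rpow_add hx, div_eq_mul_inv]
  rw [shihaPDF, ushPDF, hpow, hpow₂, rpow_sub_one hx.ne']
  ring

lemma indicator_shihaPDF_neg_log (ω η x : ℝ) :
    (Set.Ioi 0).indicator
        (fun x => ENNReal.ofReal ((Set.Ici 0).indicator (shihaPDF ω η) (-log x)) *
          ENNReal.ofReal x⁻¹) x =
      ENNReal.ofReal ((Set.Ioc 0 1).indicator (ushPDF ω η) x) := by
  by_cases hx : 0 < x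
  · have hmem : -log x ∈ Set.Ici 0 ↔ x ∈ Set.Ioc 0 1 := by
      simp [Set.mem_Ioc, hx, log_nonpos_iff hx.le]
    by_cases hx₁ : x ∈ Set.Ioc 0 1
    · rw [Set.indicator_of_mem (Set.mem_Ioi.2 hx), Set.indicator_of_mem (hmem.2 hx₁),
        Set.indicator_of_mem hx₁, ← ENNReal.ofReal_mul' (inv_nonneg.2 hx.le),
        shihaPDF_neg_log_mul_inv ω η hx]
    · rw [Set.indicator_of_mem (Set.mem_Ioi.2 hx), Set.indicator_of_notMem (mt hmem.1 hx₁),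
        Set.indicator_of_notMem hx₁, ENNReal.ofReal_zero, zero_mul]
  · rw [Set.indicator_of_notMem (mt Set.mem_Ioi.1 hx), Set.indicator_of_notMem fun h => hx h.1, ENNReal.ofReal_zero]

theorem ush_from_shiha_general (ω η : ℝ) :
    Measure.map (fun y => Real.exp (-y))
      (volume.withDensity (fun y => ENNReal.ofReal (Set.indicator (Set.Ici 0)
        (fun y => ω / (ω + 3*η) * (ω + (2*η + 8*ω*η*y) * Real.exp (-ω*y)) * Real.exp (-ω*y)) y)))
    = volume.withDensity (fun x => ENNReal.ofReal (Set.indicator (Set.Ioc 0 1)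
        (fun x => ω / (ω + 3*η) * (ω * x ^ (ω-1) + (2*η - 8*ω*η*Real.log x) * x ^ (2*ω-1))) x)) := by
  rw [map_exp_neg_withDensity]
  exact congrArg _ (funext (indicator_shihaPDF_neg_log ω η))

theorem ush_from_shiha (ω η : ℝ) (hω : 0 < ω) (hη : 0 < η) :
    Measure.map (fun y => Real.exp (-y))
      (volume.withDensity (fun y => ENNReal.ofReal (Set.indicator (Set.Ici 0)
        (fun y => ω / (ω + 3*η) * (ω + (2*η + 8*ω*η*y) * Real.exp (-ω*y)) * Real.exp (-ω*y)) y)))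
    = volume.withDensity (fun x => ENNReal.ofReal (Set.indicator (Set.Ioc 0 1)
        (fun x => ω / (ω + 3*η) * (ω * x ^ (ω-1) + (2*η - 8*ω*η*Real.log x) * x ^ (2*ω-1))) x)) :=
  ush_from_shiha_general ω η
end
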